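/- Let T be a tree in which every leaf's unique neighbor has degree exactly 3, and suppose T has at least one corridor both of whose endpoints are junctions. Then every corridor with a leaf endpoint has length 1 (hence c₁(T) = c₂(T) and c(T) = c₂(T)+2); there exists a corridor with both endpoints junctions such that one of its endpoint junctions is adjacent to exactly two leaves; and if v is one of these two leaves, then c₁(Tᵛ) ≤ c₂(T)+1, c₂(Tᵛ) ≤ c₂(T), and c(Tᵛ) ≤ c(T), where Tᵛ is the tree obtained from T by removing v. -/

import Mathlib

namespace PMT

variable {V : Type}

/-- The degree of a vertex (number of neighbors). -/
noncomputable def deg (G : SimpleGraph V) (v : V) : ℕ := (G.neighborSet v).ncard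

/-- A corridor: a (nontrivial) path whose endpoints have degree different from 2 and
whose internal vertices all have degree exactly 2. -/
def IsCorridor (G : SimpleGraph V) {a b : V} (p : G.Walk a b) : Prop :=
  p.IsPath ∧ 1 ≤ p.length ∧ deg G a ≠ 2 ∧ deg G b ≠ 2 ∧
    ∀ x ∈ p.support, x ≠ a → x ≠ b → deg G x = 2

/-- `c₁(T)`: the maximum length of a corridor. -/
noncomputable def c1 (G : SimpleGraph V) : ℕ :=
  sSup {n | ∃ (a b : V) (p : G.Walk a b), IsCorridor G p ∧ p.length = n}

/-- `c₂(T)`: the maximum length of a corridor both of whose endpoints are junctions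
(vertices of degree greater than 2); `0` if no such corridor exists. -/
noncomputable def c2 (G : SimpleGraph V) : ℕ :=
  sSup {n | ∃ (a b : V) (p : G.Walk a b),
    IsCorridor G p ∧ 2 < deg G a ∧ 2 < deg G b ∧ p.length = n}

/-- A path graph: all vertices lie on a single path. -/
def IsPathGraph (G : SimpleGraph V) : Prop :=
  ∃ (a b : V) (p : G.Walk a b), p.IsPath ∧ ∀ x : V, x ∈ p.support

/- The constant `c(T)`: `c₁(T)` if `T` is a path graph,
`max (c₁(T)+1) (c₂(T)+2)` otherwise. -/
open Classical in
noncomputable def cT (G : SimpleGraph V) : ℕ :=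
  if IsPathGraph G then c1 G else max (c1 G + 1) (c2 G + 2)

end PMT

namespace PMT

variable {V : Type} [Fintype V] {G : SimpleGraph V}

lemma corridor_reverse {a b : V} {p : G.Walk a b} (h : IsCorridor G p) :
    IsCorridor G p.reverse := by
  obtain ⟨h1, h2, h3, h4, h5⟩ := h
  refine ⟨h1.reverse, by simpa using h2, h4, h3, ?_⟩
  intro x hx hxb hxa
  rw [SimpleGraph.Walk.support_reverse, List.mem_reverse] at hx
  exact h5 x hx hxa hxb

lemma path_loop_length_zero {u : V} {p : G.Walk u u} (h : p.IsPath) : p.length = 0 := by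
  cases p with
  | nil => rfl
  | cons h' q =>
    exfalso
    rw [SimpleGraph.Walk.cons_isPath_iff] at h
    exact h.2 q.end_mem_support

lemma one_le_deg {a c : V} (h : G.Adj a c) : 1 ≤ deg G a :=
  (Set.ncard_pos (Set.toFinite _)).mpr ⟨c, h⟩

/-- neighbor set of a leaf -/
lemma leaf_neighborSet {v u : V} (hd : deg G v = 1) (h : G.Adj v u) :
    G.neighborSet v = {u} := by
  obtain ⟨a, ha⟩ := Set.ncard_eq_one.mp hd
  have : u ∈ G.neighborSet v := h
  rw [ha] at this ⊢
  rw [Set.mem_singleton_iff] at this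
  rw [this]

/-- unique paths in a tree -/
lemma tree_path_unique (hT : G.IsTree) {a b : V} (p q : G.Walk a b)
    (hp : p.IsPath) (hq : q.IsPath) : p = q := by
  have := SimpleGraph.isAcyclic_iff_path_unique.mp hT.2 ⟨p, hp⟩ ⟨q, hq⟩
  exact congrArg Subtype.val this

/-- claim 1, one-sided -/
lemma corridor_leaf_left (hleaf3 : ∀ v w : V, deg G v = 1 → G.Adj v w → deg G w = 3)
    {a b : V} {p : G.Walk a b} (hc : IsCorridor G p) (ha : deg G a = 1) :
    p.length = 1 := by
  obtain ⟨h1, h2, h3, h4, h5⟩ := hc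
  cases p with
  | nil => simp at h2
  | @cons _ c _ hadj q =>
    have hq : q.IsPath := h1.of_cons
    have hca : c ≠ a := fun h => by subst h; exact G.irrefl hadj
    by_cases hcb : c = b
    · subst hcb
      have := path_loop_length_zero hq
      simp [SimpleGraph.Walk.length_cons, this]
    · have hdc : deg G c = 2 := h5 c (by simp) hca hcb
      have := hleaf3 a c ha hadj
      omega

lemma corridor_leaf (hleaf3 : ∀ v w : V, deg G v = 1 → G.Adj v w → deg G w = 3)
    {a b : V} {p : G.Walk a b} (hc : IsCorridor G p) (hab : deg G a = 1 ∨ deg G b = 1) :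
    p.length = 1 := by
  rcases hab with ha | hb
  · exact corridor_leaf_left hleaf3 hc ha
  · have := corridor_leaf_left hleaf3 (corridor_reverse hc) hb
    simpa using this


lemma corridor_one_le_degs {a b : V} {p : G.Walk a b} (hc : IsCorridor G p) :
    1 ≤ deg G a ∧ 1 ≤ deg G b := by
  constructor
  · cases p with
    | nil => exact absurd hc.2.1 (by simp)
    | cons hadj q => exact one_le_deg hadj
  · have hr := corridor_reverse hc
    cases hrev : p.reverse with
    | nil =>
      exfalso
      have h2 := hc.2.1
      rw [← SimpleGraph.Walk.length_reverse, hrev] at h2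
      simp at h2
    | cons hadj q => exact one_le_deg hadj

end PMT
namespace PMT
open SimpleGraph Walk

set_option linter.unusedSectionVars false

variable {V : Type} [Fintype V] [DecidableEq V] {G : SimpleGraph V}

/-- Internal vertex of a path: structured split information. -/
lemma internal_split {a b u : V} {p : G.Walk a b} (hp : p.IsPath)
    (hu : u ∈ p.support) (hua : u ≠ a) (hub : u ≠ b) :
    ∃ (c₁ c₂ : V), c₁ ≠ c₂ ∧ G.Adj u c₁ ∧ G.Adj u c₂ ∧
      c₁ ∈ (p.takeUntil u hu).support ∧ c₂ ∈ (p.dropUntil u hu).support.tail := by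
  have hspec := p.take_spec hu
  have hP1 : (p.takeUntil u hu).IsPath := hp.takeUntil hu
  have hP2 : (p.dropUntil u hu).IsPath := hp.dropUntil hu
  have hP1n : ¬ (p.takeUntil u hu).Nil := not_nil_of_ne (Ne.symm hua)
  have hP2n : ¬ (p.dropUntil u hu).Nil := not_nil_of_ne hub
  have hR1n : ¬ (p.takeUntil u hu).reverse.Nil := by
    rw [nil_iff_length_eq] at hP1n ⊢
    simpa using hP1n
  obtain ⟨c₁, hadj₁, R', hR⟩ := not_nil_iff.mp hR1n
  obtain ⟨c₂, hadj₂, Q', hQ⟩ := not_nil_iff.mp hP2n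
  have hc₁mem : c₁ ∈ (p.takeUntil u hu).support := by
    have : c₁ ∈ (p.takeUntil u hu).reverse.support := by rw [hR]; simp
    rwa [support_reverse, List.mem_reverse] at this
  have hc₂mem : c₂ ∈ (p.dropUntil u hu).support.tail := by rw [hQ]; simp
  refine ⟨c₁, c₂, ?_, hadj₁, hadj₂, hc₁mem, hc₂mem⟩
  have hnd : p.support.Nodup := hp.support_nodup
  rw [← hspec, support_append] at hnd
  have hdisj := (List.nodup_append'.mp hnd).2.2
  intro hcc
  exact hdisj hc₁mem (hcc ▸ hc₂mem)

lemma two_le_deg_internal {a b u : V} {p : G.Walk a b} (hp : p.IsPath)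
    (hu : u ∈ p.support) (hua : u ≠ a) (hub : u ≠ b) :
    2 ≤ deg G u := by
  obtain ⟨c₁, c₂, hne, h1, h2, -, -⟩ := internal_split hp hu hua hub
  have hsub : {c₁, c₂} ⊆ G.neighborSet u := by
    intro x hx; rcases hx with h | h
    · subst h; exact h1
    · rw [Set.mem_singleton_iff] at h; subst h; exact h2
  calc 2 = ({c₁, c₂} : Set V).ncard := (Set.ncard_pair hne).symm
  _ ≤ _ := Set.ncard_le_ncard hsub (Set.toFinite _)

end PMT
namespace PMT
open SimpleGraph Walk

set_option linter.unusedSectionVars false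

variable {V : Type} [Fintype V] [DecidableEq V] {G : SimpleGraph V}

/-- From any nontrivial path starting at `c` and ending at a vertex of degree ≠ 2,
extract a corridor-like prefix. -/
lemma exists_corridor_prefix {c d : V} (r : G.Walk c d) :
    r.IsPath → 1 ≤ r.length → deg G d ≠ 2 →
    ∃ (y : V) (p : G.Walk c y), p.IsPath ∧ 1 ≤ p.length ∧ deg G y ≠ 2 ∧
      (∀ x ∈ p.support, x ≠ c → x ≠ y → deg G x = 2) ∧ p.support ⊆ r.support := by
  induction r with
  | nil => intro _ h _; simp at h
  | @cons c e d hadj r' ih =>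
    intro hp hl hd
    by_cases hde : deg G e = 2
    · -- recurse
      have hed : e ≠ d := fun h => by rw [h] at hde; exact hd hde
      have hl' : 1 ≤ r'.length := by
        by_contra h
        exact hed (Walk.eq_of_length_eq_zero (p := r') (by omega))
      obtain ⟨y, p', hp', hl'', hy, hint, hsub⟩ := ih hp.of_cons hl' hd
      have hcs : c ∉ r'.support := ((cons_isPath_iff _ _).mp hp).2
      refine ⟨y, Walk.cons hadj p', ?_, by simp, hy, ?_, ?_⟩
      · rw [cons_isPath_iff]
        exact ⟨hp', fun h => hcs (hsub h)⟩
      · intro x hx hxc hxy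
        rw [support_cons, List.mem_cons] at hx
        rcases hx with h | h
        · exact absurd h hxc
        · by_cases hxe : x = e
          · rw [hxe]; exact hde
          · exact hint x h hxe hxy
      · intro x hx
        rw [support_cons, List.mem_cons] at hx
        rw [support_cons, List.mem_cons]
        rcases hx with h | h
        · exact Or.inl h
        · exact Or.inr (hsub h)
    · refine ⟨e, Walk.cons hadj Walk.nil, ?_, by simp, hde, ?_, ?_⟩
      · simp [hadj.ne]
      · intro x hx hxc hxe
        simp only [support_cons, support_nil, List.mem_cons] at hx
        rcases hx with h | h
        · exact absurd h hxc
        · rcases h with h | h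
          · exact absurd h hxe
          · simp at h
      · intro x hx
        simp only [support_cons, support_nil, List.mem_cons] at hx
        rw [support_cons, List.mem_cons]
        rcases hx with h | h
        · exact Or.inl h
        · rcases h with h | h
          · subst h; exact Or.inr (start_mem_support r')
          · simp at h

/-- The starting endpoint of a maximum-length path in a tree is a leaf. -/
lemma max_path_leaf (hT : G.IsTree) {s t : V} (q : G.Walk s t) (hq : q.IsPath)
    (hlen : 1 ≤ q.length)
    (hmax : ∀ {a b : V} (p : G.Walk a b), p.IsPath → p.length ≤ q.length) :
    deg G s = 1 := by
  cases q with
  | nil => simp at hlen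
  | @cons _ x₀ _ hadj q₁ =>
    have hq₁ : q₁.IsPath := hq.of_cons
    have hs : s ∉ q₁.support := ((cons_isPath_iff _ _).mp hq).2
    have h1 : 1 ≤ deg G s := one_le_deg hadj
    by_contra hne
    -- get z ∈ N(s), z ≠ x₀
    have hx₀ : x₀ ∈ G.neighborSet s := hadj
    obtain ⟨z, hz, hzx⟩ : ∃ z ∈ G.neighborSet s, z ≠ x₀ := by
      by_contra h
      push_neg at h
      have : G.neighborSet s ⊆ {x₀} := fun w hw => h w hw
      have := Set.ncard_le_ncard this (Set.toFinite _)
      rw [Set.ncard_singleton] at this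
      have : deg G s = 1 := le_antisymm this h1
      exact hne this
    have hzadj : G.Adj s z := hz
    have hzs : z ≠ s := fun h => by subst h; exact G.irrefl hzadj
    -- z not in q's support
    have hznot : z ∉ q₁.support := by
      intro hmem
      have hW : (Walk.cons hadj (q₁.takeUntil z hmem)).IsPath := by
        rw [cons_isPath_iff]
        refine ⟨hq₁.takeUntil hmem, fun h => hs (q₁.support_takeUntil_subset hmem h)⟩
      have hE : (Walk.cons hzadj Walk.nil : G.Walk s z).IsPath := by simp [hzadj.ne]
      have := tree_path_unique hT _ _ hW hE
      have hlen := congrArg Walk.length this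
      simp only [length_cons, length_nil] at hlen
      exact hzx (Walk.eq_of_length_eq_zero (p := q₁.takeUntil z hmem) (by omega)).symm
    have hznotq : z ∉ (Walk.cons hadj q₁).support := by
      rw [support_cons, List.mem_cons]
      rintro (h | h)
      · exact hzs h
      · exact hznot h
    have hW2 : (Walk.cons hzadj.symm (Walk.cons hadj q₁)).IsPath := by
      rw [cons_isPath_iff]
      exact ⟨hq, hznotq⟩
    have h2 := hmax _ hW2
    rw [length_cons, length_cons] at h2
    omega

end PMT
namespace PMT
open SimpleGraph Walk

set_option linter.unusedSectionVars false

variable {V : Type} [Fintype V] [DecidableEq V] {G : SimpleGraph V}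

/-- In a tree, if `z` is on the tail of a path starting with edge `u-e` and `z` is
adjacent to `u`, then `z = e`. -/
lemma adj_mem_eq_second (hT : G.IsTree) {u e d z : V} (hadj : G.Adj u e) (q : G.Walk e d)
    (hq : (Walk.cons hadj q).IsPath) (hz : z ∈ q.support) (hzadj : G.Adj u z) : z = e := by
  have hq' : q.IsPath := hq.of_cons
  have hu : u ∉ q.support := ((cons_isPath_iff _ _).mp hq).2
  have hW : (Walk.cons hadj (q.takeUntil z hz)).IsPath := by
    rw [cons_isPath_iff]
    exact ⟨hq'.takeUntil hz, fun h => hu (q.support_takeUntil_subset hz h)⟩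
  have hE : (Walk.cons hzadj Walk.nil : G.Walk u z).IsPath := by simp [hzadj.ne]
  have := tree_path_unique hT _ _ hW hE
  have hlen := congrArg Walk.length this
  simp only [length_cons, length_nil] at hlen
  exact (Walk.eq_of_length_eq_zero (p := q.takeUntil z hz) (by omega)).symm

/-- In a tree which is a path graph, every vertex has degree at most 2. -/
lemma no_junction_of_pathgraph (hT : G.IsTree) (hpg : IsPathGraph G) (u : V) :
    deg G u ≤ 2 := by
  obtain ⟨a, b, p, hp, hall⟩ := hpg
  have hu : u ∈ p.support := hall u
  by_cases hua : u = a
  · subst hua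
    cases p with
    | nil =>
      have : G.neighborSet u ⊆ {u} := by
        intro z hz
        have hzz := hall z
        simp only [support_nil, List.mem_singleton] at hzz
        simp [hzz]
      calc deg G u ≤ ({u} : Set V).ncard := Set.ncard_le_ncard this (Set.toFinite _)
      _ ≤ 2 := by simp
    | @cons _ e _ hadj q =>
      have : G.neighborSet u ⊆ {e} := by
        intro z hz
        have hzadj : G.Adj u z := hz
        have hzu : z ≠ u := fun h => by subst h; exact G.irrefl hzadj
        have : z ∈ q.support := by
          have := hall z
          rw [support_cons, List.mem_cons] at this
          rcases this with h | h
          · exact absurd h hzu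
          · exact h
        exact adj_mem_eq_second hT hadj q hp this hzadj
      calc deg G u ≤ ({e} : Set V).ncard := Set.ncard_le_ncard this (Set.toFinite _)
      _ ≤ 2 := by simp
  · by_cases hub : u = b
    · subst hub
      cases hrev : p.reverse with
      | nil =>
        exfalso
        exact hua rfl
      | @cons _ e _ hadj q =>
        have hprev : p.reverse.IsPath := hp.reverse
        rw [hrev] at hprev
        have : G.neighborSet u ⊆ {e} := by
          intro z hz
          have hzadj : G.Adj u z := hz
          have hzu : z ≠ u := fun h => by subst h; exact G.irrefl hzadj
          have hzsup : z ∈ p.reverse.support := by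
            rw [support_reverse, List.mem_reverse]; exact hall z
          rw [hrev, support_cons, List.mem_cons] at hzsup
          rcases hzsup with h | h
          · exact absurd h hzu
          · exact adj_mem_eq_second hT hadj q hprev h hzadj
        calc deg G u ≤ ({e} : Set V).ncard := Set.ncard_le_ncard this (Set.toFinite _)
        _ ≤ 2 := by simp
    · -- internal
      have hP1 : (p.takeUntil u hu).IsPath := hp.takeUntil hu
      have hP2 : (p.dropUntil u hu).IsPath := hp.dropUntil hu
      have hRpath : (p.takeUntil u hu).reverse.IsPath := hP1.reverse
      have hRn : ¬ (p.takeUntil u hu).reverse.Nil := not_nil_of_ne (fun hh => hua hh)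
      have hDn : ¬ (p.dropUntil u hu).Nil := not_nil_of_ne (fun hh => hub hh)
      obtain ⟨c₁, hadj₁, R', hReq⟩ := not_nil_iff.mp hRn
      obtain ⟨c₂, hadj₂, Q', hQeq⟩ := not_nil_iff.mp hDn
      have hsub : G.neighborSet u ⊆ {c₁, c₂} := by
        intro z hz
        have hzadj : G.Adj u z := hz
        have hzu : z ≠ u := fun h => by subst h; exact G.irrefl hzadj
        have hzmem : z ∈ p.support := hall z
        rw [← p.take_spec hu, mem_support_append_iff] at hzmem
        rcases hzmem with h | h
        · left
          have hzR : z ∈ (p.takeUntil u hu).reverse.support := by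
            rw [support_reverse, List.mem_reverse]; exact h
          rw [hReq, support_cons, List.mem_cons] at hzR
          rcases hzR with h' | h'
          · exact absurd h' hzu
          · exact adj_mem_eq_second hT hadj₁ R' (hReq ▸ hRpath) h' hzadj
        · right
          rw [hQeq, support_cons, List.mem_cons] at h
          rcases h with h' | h'
          · exact absurd h' hzu
          · exact adj_mem_eq_second hT hadj₂ Q' (hQeq ▸ hP2) h' hzadj
      calc deg G u ≤ ({c₁, c₂} : Set V).ncard := Set.ncard_le_ncard hsub (Set.toFinite _)
      _ ≤ 2 := by
        calc ({c₁, c₂} : Set V).ncard ≤ ({c₂} : Set V).ncard + 1 := Set.ncard_insert_le _ _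
        _ ≤ 2 := by simp

end PMT
namespace PMT
open SimpleGraph Walk

set_option linter.unusedSectionVars false

variable {V : Type} [Fintype V] [DecidableEq V] {G : SimpleGraph V}

lemma image_neighborSet_induce {v : V} (x : ↥{y : V | y ≠ v}) :
    Subtype.val '' ((G.induce {y : V | y ≠ v}).neighborSet x) =
      G.neighborSet (x : V) \ {v} := by
  ext y
  constructor
  · rintro ⟨z, hz, rfl⟩
    refine ⟨hz, fun hmem => z.property (by simpa using hmem)⟩
  · rintro ⟨hy, hyv⟩
    have hyv' : y ≠ v := by simpa using hyv
    exact ⟨⟨y, hyv'⟩, hy, rfl⟩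

lemma deg_induce (v : V) (x : ↥{y : V | y ≠ v}) :
    deg (G.induce {y : V | y ≠ v}) x = (G.neighborSet (x : V) \ {v}).ncard := by
  unfold deg
  rw [← Set.ncard_image_of_injective _ Subtype.val_injective, image_neighborSet_induce]

lemma deg_induce_of_ne {v u : V} (hdv : deg G v = 1) (hvu : G.Adj v u)
    (x : ↥{y : V | y ≠ v}) (hxu : (x : V) ≠ u) :
    deg (G.induce {y : V | y ≠ v}) x = deg G (x : V) := by
  rw [deg_induce]
  have hv : v ∉ G.neighborSet (x : V) := by
    intro h
    have h2 : (x : V) ∈ G.neighborSet v := (G.mem_neighborSet _ _).mpr ((G.mem_neighborSet _ _).mp h).symm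
    rw [leaf_neighborSet hdv hvu] at h2
    exact hxu h2
  rw [Set.diff_singleton_eq_self hv]
  rfl

/-- If a path starts at a leaf whose unique neighbor is a junction `u`, the rest is a
corridor provided internal degrees are 2. -/
lemma leaf_start_length {vs b u : V} (P : G.Walk vs b) (hpath : P.IsPath)
    (hlen : 1 ≤ P.length)
    (hNv : G.neighborSet vs = {u}) (hdu : deg G u = 3)
    (hub : u ≠ b) (hdb : deg G b ≠ 2)
    (hint : ∀ x ∈ P.support, x ≠ vs → x ≠ b → x ≠ u → deg G x = 2) :
    ∃ (rest : G.Walk u b), IsCorridor G rest ∧ P.length = rest.length + 1 := by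
  cases P with
  | nil => simp at hlen
  | @cons _ e _ hadj q =>
    have he : e = u := by
      have : e ∈ G.neighborSet vs := hadj
      rwa [hNv] at this
    subst he
    have hq : q.IsPath := hpath.of_cons
    have hvs : vs ∉ q.support := ((cons_isPath_iff _ _).mp hpath).2
    refine ⟨q, ⟨hq, ?_, by omega, hdb, ?_⟩, by simp⟩
    · by_contra h
      exact hub (Walk.eq_of_length_eq_zero (p := q) (by omega))
    · intro x hx hxu hxb
      have hxvs : x ≠ vs := fun h => hvs (h ▸ hx)
      exact hint x (by rw [support_cons]; exact List.mem_cons_of_mem _ hx) hxvs hxb hxu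

/-- Core analysis: corridors of the graph with leaf `v` removed. -/
lemma induced_corridor_bound (hT : G.IsTree) {u v v' x₁ : V}
    (hNu : G.neighborSet u = {v, v', x₁})
    (hvv' : v ≠ v') (hvx : v ≠ x₁) (hv'x : v' ≠ x₁)
    (hdv : deg G v = 1) (hdv' : deg G v' = 1) (hdu : deg G u = 3)
    {a' b' : ↥{y : V | y ≠ v}} (p' : (G.induce {y : V | y ≠ v}).Walk a' b')
    (hc' : IsCorridor (G.induce {y : V | y ≠ v}) p') :
    ((2 < deg (G.induce {y : V | y ≠ v}) a' ∧ 2 < deg (G.induce {y : V | y ≠ v}) b') →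
      ∃ (a b : V) (P : G.Walk a b), IsCorridor G P ∧ 2 < deg G a ∧ 2 < deg G b ∧
        P.length = p'.length) ∧
    (∃ (a b : V) (P : G.Walk a b), IsCorridor G P ∧
      (P.length = p'.length ∨ p'.length = P.length + 1)) := by
  have hadj_uv : G.Adj u v := by
    have : v ∈ G.neighborSet u := by rw [hNu]; simp
    exact this
  have hadj_uv' : G.Adj u v' := by
    have : v' ∈ G.neighborSet u := by rw [hNu]; simp
    exact this
  have hvu : v ≠ u := fun h => G.irrefl (h ▸ hadj_uv)
  have hv'u : v' ≠ u := fun h => G.irrefl (h ▸ hadj_uv')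
  have hu_mem : u ∈ {y : V | y ≠ v} := fun h => hvu (h.symm)
  have hdegu' : deg (G.induce {y : V | y ≠ v}) ⟨u, hu_mem⟩ = 2 := by
    rw [deg_induce]
    have hset : G.neighborSet u \ {v} = {v', x₁} := by
      rw [hNu]
      ext y
      simp only [Set.mem_diff, Set.mem_insert_iff, Set.mem_singleton_iff]
      constructor
      · rintro ⟨h | h | h, hne⟩
        · exact absurd h hne
        · exact Or.inl h
        · exact Or.inr h
      · rintro (h | h)
        · exact ⟨Or.inr (Or.inl h), fun hh => hvv' (hh.symm.trans h)⟩
        · exact ⟨Or.inr (Or.inr h), fun hh => hvx (hh.symm.trans h)⟩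
    rw [hset, Set.ncard_pair hv'x]
  -- mapped walk
  let f : (G.induce {y : V | y ≠ v}) →g G := ⟨Subtype.val, fun {x y} h => h⟩
  have hf : Function.Injective f := Subtype.val_injective
  let P : G.Walk (a' : V) (b' : V) := p'.map f
  have hPpath : P.IsPath := Walk.map_isPath_of_injective hf hc'.1
  have hPlen : P.length = p'.length := Walk.length_map _ _
  have hPsupp : ∀ x ∈ P.support, ∃ x' : ↥{y : V | y ≠ v}, x' ∈ p'.support ∧ (x' : V) = x := by
    intro x hx
    rw [Walk.support_map, List.mem_map] at hx
    obtain ⟨x', hx', hval⟩ := hx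
    exact ⟨x', hx', hval⟩
  have hxv : ∀ x ∈ P.support, x ≠ v := by
    intro x hx
    obtain ⟨x', _, rfl⟩ := hPsupp x hx
    exact x'.property
  have ha'u : (a' : V) ≠ u := by
    intro h
    have heq : a' = ⟨u, hu_mem⟩ := Subtype.ext h
    have h2 : deg (G.induce {y : V | y ≠ v}) a' = 2 := by rw [heq]; exact hdegu'
    exact hc'.2.2.1 h2
  have hb'u : (b' : V) ≠ u := by
    intro h
    have heq : b' = ⟨u, hu_mem⟩ := Subtype.ext h
    have h2 : deg (G.induce {y : V | y ≠ v}) b' = 2 := by rw [heq]; exact hdegu'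
    exact hc'.2.2.2.1 h2
  have hdega : deg G (a' : V) = deg (G.induce {y : V | y ≠ v}) a' :=
    (deg_induce_of_ne hdv hadj_uv.symm a' ha'u).symm
  have hdegb : deg G (b' : V) = deg (G.induce {y : V | y ≠ v}) b' :=
    (deg_induce_of_ne hdv hadj_uv.symm b' hb'u).symm
  have hint : ∀ x ∈ P.support, x ≠ (a' : V) → x ≠ (b' : V) → x ≠ u → deg G x = 2 := by
    intro x hx hxa hxb hxu
    obtain ⟨x', hx', rfl⟩ := hPsupp x hx
    have h2 : deg (G.induce {y : V | y ≠ v}) x' = 2 :=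
      hc'.2.2.2.2 x' hx' (fun h => hxa (congrArg Subtype.val h))
        (fun h => hxb (congrArg Subtype.val h))
    rw [← deg_induce_of_ne hdv hadj_uv.symm x' hxu]
    exact h2
  by_cases hu : u ∈ P.support
  · -- u is internal in P
    have hua : u ≠ (a' : V) := Ne.symm ha'u
    have hub : u ≠ (b' : V) := Ne.symm hb'u
    obtain ⟨c₁, c₂, hcc, hadj₁, hadj₂, hc₁m, hc₂m⟩ := internal_split hPpath hu hua hub
    have hc₁P : c₁ ∈ P.support := P.support_takeUntil_subset hu hc₁m
    have hc₂P : c₂ ∈ P.support := P.support_dropUntil_subset hu (List.mem_of_mem_tail hc₂m)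
    have hc₁N : c₁ ∈ G.neighborSet u := hadj₁
    have hc₂N : c₂ ∈ G.neighborSet u := hadj₂
    rw [hNu] at hc₁N hc₂N
    have hc₁v : c₁ ≠ v := hxv c₁ hc₁P
    have hc₂v : c₂ ≠ v := hxv c₂ hc₂P
    have hv'P : v' ∈ P.support := by
      rcases hc₁N with h | h | h
      · exact absurd h hc₁v
      · exact h ▸ hc₁P
      · rcases hc₂N with h2 | h2 | h2
        · exact absurd h2 hc₂v
        · exact h2 ▸ hc₂P
        · exact absurd (h.trans h2.symm) hcc
    -- v' must be an endpoint of p'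
    obtain ⟨x', hx'm, hx'v⟩ := hPsupp v' hv'P
    have hdx' : deg (G.induce {y : V | y ≠ v}) x' = 1 := by
      rw [deg_induce_of_ne hdv hadj_uv.symm x' (hx'v ▸ hv'u), hx'v]
      exact hdv'
    have hend : (a' : V) = v' ∨ (b' : V) = v' := by
      by_contra h
      push_neg at h
      have h1 : x' ≠ a' := fun hh => h.1 (by rw [← hx'v, hh])
      have h2 : x' ≠ b' := fun hh => h.2 (by rw [← hx'v, hh])
      have := hc'.2.2.2.2 x' hx'm h1 h2
      omega
    have hNv' : G.neighborSet v' = {u} := leaf_neighborSet hdv' hadj_uv'.symm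
    constructor
    · rintro ⟨hja, hjb⟩
      exfalso
      rcases hend with h | h
      · rw [← hdega, h, hdv'] at hja; omega
      · rw [← hdegb, h, hdv'] at hjb; omega
    · rcases hend with h | h
      · -- P starts at the leaf v'
        obtain ⟨rest, hrest, hlen⟩ := leaf_start_length P hPpath
          (by rw [hPlen]; exact hc'.2.1) (h ▸ hNv') hdu hub
          (by rw [hdegb]; exact hc'.2.2.2.1) hint
        exact ⟨u, (b' : V), rest, hrest, Or.inr (by omega)⟩
      · -- P ends at the leaf v'; use reverse
        have hintr : ∀ x ∈ P.reverse.support, x ≠ (b' : V) → x ≠ (a' : V) → x ≠ u →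
            deg G x = 2 := by
          intro x hx hxb hxa hxu
          rw [Walk.support_reverse, List.mem_reverse] at hx
          exact hint x hx hxa hxb hxu
        obtain ⟨rest, hrest, hlen⟩ := leaf_start_length P.reverse hPpath.reverse
          (by rw [Walk.length_reverse, hPlen]; exact hc'.2.1) (h ▸ hNv') hdu hua
          (by rw [hdega]; exact hc'.2.2.1) hintr
        refine ⟨u, (a' : V), rest, hrest, Or.inr ?_⟩
        rw [Walk.length_reverse] at hlen
        omega
  · -- u not in P: P is a corridor of G
    have hPcorr : IsCorridor G P := by
      refine ⟨hPpath, by rw [hPlen]; exact hc'.2.1,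
        by rw [hdega]; exact hc'.2.2.1, by rw [hdegb]; exact hc'.2.2.2.1, ?_⟩
      intro x hx hxa hxb
      exact hint x hx hxa hxb (fun h => hu (h ▸ hx))
    constructor
    · rintro ⟨hja, hjb⟩
      exact ⟨_, _, P, hPcorr, by rw [hdega]; exact hja, by rw [hdegb]; exact hjb, hPlen⟩
    · exact ⟨_, _, P, hPcorr, Or.inl hPlen⟩

end PMT

open SimpleGraph Walk in
set_option linter.unusedSectionVars false in
/-- in a tree where every leaf's unique neighbor has degree exactly 3 and
which has a corridor with both endpoints junctions: every corridor with a leaf endpoint has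
length 1 (hence `c₁ = c₂` and `c = c₂ + 2`); there is a junction-junction corridor with an
endpoint junction adjacent to exactly two leaves; and removing either of these two leaves
gives `c₁(Tᵛ) ≤ c₂(T)+1`, `c₂(Tᵛ) ≤ c₂(T)`, and `c(Tᵛ) ≤ c(T)`. -/
theorem leaf_neighbor_deg3 {V : Type} [Fintype V] (G : SimpleGraph V) (hT : G.IsTree)
    (hleaf3 : ∀ v w : V, PMT.deg G v = 1 → G.Adj v w → PMT.deg G w = 3)
    (hjc : ∃ (a b : V) (p : G.Walk a b),
      PMT.IsCorridor G p ∧ 2 < PMT.deg G a ∧ 2 < PMT.deg G b) :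
    (∀ (a b : V) (p : G.Walk a b), PMT.IsCorridor G p →
        (PMT.deg G a = 1 ∨ PMT.deg G b = 1) → p.length = 1) ∧
    PMT.c1 G = PMT.c2 G ∧
    PMT.cT G = PMT.c2 G + 2 ∧
    (∃ (a b : V) (p : G.Walk a b),
      PMT.IsCorridor G p ∧ 2 < PMT.deg G a ∧ 2 < PMT.deg G b ∧
      ∃ l₁ l₂ : V, l₁ ≠ l₂ ∧ G.Adj a l₁ ∧ G.Adj a l₂ ∧
        PMT.deg G l₁ = 1 ∧ PMT.deg G l₂ = 1 ∧
        (∀ l : V, G.Adj a l → PMT.deg G l = 1 → l = l₁ ∨ l = l₂) ∧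
        ∀ v : V, (v = l₁ ∨ v = l₂) →
          PMT.c1 (G.induce {x : V | x ≠ v}) ≤ PMT.c2 G + 1 ∧
          PMT.c2 (G.induce {x : V | x ≠ v}) ≤ PMT.c2 G ∧
          PMT.cT (G.induce {x : V | x ≠ v}) ≤ PMT.cT G) := by
  classical
  obtain ⟨a₀, b₀, p₀, hc₀, hja₀, hjb₀⟩ := hjc
  have hbdd1 : BddAbove {n | ∃ (a b : V) (p : G.Walk a b), PMT.IsCorridor G p ∧ p.length = n} := by
    refine ⟨Fintype.card V, ?_⟩
    rintro n ⟨a, b, p, hc, rfl⟩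
    exact hc.1.length_lt.le
  have hbdd2 : BddAbove {n | ∃ (a b : V) (p : G.Walk a b), PMT.IsCorridor G p ∧
      2 < PMT.deg G a ∧ 2 < PMT.deg G b ∧ p.length = n} := by
    refine ⟨Fintype.card V, ?_⟩
    rintro n ⟨a, b, p, hc, -, -, rfl⟩
    exact hc.1.length_lt.le
  have claim1 : ∀ (a b : V) (p : G.Walk a b), PMT.IsCorridor G p →
      (PMT.deg G a = 1 ∨ PMT.deg G b = 1) → p.length = 1 :=
    fun a b p hc hab => PMT.corridor_leaf hleaf3 hc hab
  have h1c2 : 1 ≤ PMT.c2 G :=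
    le_trans hc₀.2.1 (le_csSup hbdd2 ⟨a₀, b₀, p₀, hc₀, hja₀, hjb₀, rfl⟩)
  have hc2le : PMT.c2 G ≤ PMT.c1 G := by
    apply csSup_le'
    rintro n ⟨a, b, p, hc, -, -, hn⟩
    exact le_csSup hbdd1 ⟨a, b, p, hc, hn⟩
  have hc1le : PMT.c1 G ≤ PMT.c2 G := by
    apply csSup_le'
    rintro n ⟨a, b, p, hc, rfl⟩
    by_cases hj : 2 < PMT.deg G a ∧ 2 < PMT.deg G b
    · exact le_csSup hbdd2 ⟨a, b, p, hc, hj.1, hj.2, rfl⟩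
    · have h1a : 1 ≤ PMT.deg G a := (PMT.corridor_one_le_degs hc).1
      have h1b : 1 ≤ PMT.deg G b := (PMT.corridor_one_le_degs hc).2
      have h2a := hc.2.2.1
      have h2b := hc.2.2.2.1
      have : PMT.deg G a = 1 ∨ PMT.deg G b = 1 := by
        push_neg at hj
        by_cases hja : 2 < PMT.deg G a
        · right; have := hj hja; omega
        · left; omega
      rw [claim1 a b p hc this]
      exact h1c2
  have hc1c2 : PMT.c1 G = PMT.c2 G := le_antisymm hc1le hc2le
  have hnpg : ¬ PMT.IsPathGraph G := by
    intro hpg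
    have := PMT.no_junction_of_pathgraph hT hpg a₀
    omega
  have hcT : PMT.cT G = PMT.c2 G + 2 := by
    rw [PMT.cT, if_neg hnpg, hc1c2]
    omega
  refine ⟨claim1, hc1c2, hcT, ?_⟩
  -- === longest path construction ===
  have hSPne : ({n | ∃ (a b : V) (p : G.Walk a b), p.IsPath ∧ p.length = n}).Nonempty :=
    ⟨0, a₀, a₀, Walk.nil, by simp, rfl⟩
  have hSPbdd : BddAbove {n | ∃ (a b : V) (p : G.Walk a b), p.IsPath ∧ p.length = n} := by
    refine ⟨Fintype.card V, ?_⟩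
    rintro n ⟨a, b, p, hp, rfl⟩
    exact hp.length_lt.le
  obtain ⟨s, t, q, hq, hqlen⟩ := Nat.sSup_mem hSPne hSPbdd
  have hmaxq : ∀ {a b : V} (p : G.Walk a b), p.IsPath → p.length ≤ q.length := by
    intro a b p hp
    rw [hqlen]
    exact le_csSup hSPbdd ⟨a, b, p, hp, rfl⟩
  -- q has length ≥ 2
  have hqlen2 : 2 ≤ q.length := by
    have hpos : 0 < (G.neighborSet a₀).ncard := by
      have : PMT.deg G a₀ = (G.neighborSet a₀).ncard := rfl
      omega
    obtain ⟨c, hcN⟩ := (Set.ncard_pos (Set.toFinite _)).mp hpos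
    obtain ⟨d, hdN, hdc⟩ := Set.exists_ne_of_one_lt_ncard (s := G.neighborSet a₀) (by
      have : PMT.deg G a₀ = (G.neighborSet a₀).ncard := rfl
      omega) c
    have hca : G.Adj a₀ c := hcN
    have hda : G.Adj a₀ d := hdN
    have hpath : (Walk.cons hca.symm (Walk.cons hda Walk.nil)).IsPath := by
      simp [Walk.isPath_def, hca.ne', hdc.symm, hda.ne]
    have := hmaxq _ hpath
    simpa using this
  have hds : PMT.deg G s = 1 := PMT.max_path_leaf hT q hq (by omega) hmaxq
  have hdt : PMT.deg G t = 1 := by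
    refine PMT.max_path_leaf hT q.reverse hq.reverse (by rw [Walk.length_reverse]; omega) ?_
    intro a b p hp
    rw [Walk.length_reverse]
    exact hmaxq p hp
  obtain ⟨u, hadj, q₁, rfl⟩ :=
    (Walk.not_nil_iff (p := q)).mp ((Walk.not_nil_iff_lt_length (p := q)).mpr (by omega))
  have hdu : PMT.deg G u = 3 := hleaf3 s u hds hadj
  have hq₁ : q₁.IsPath := hq.of_cons
  have hsnq : s ∉ q₁.support := ((Walk.cons_isPath_iff _ _).mp hq).2
  have hq₁len : 1 ≤ q₁.length := by
    have := Walk.length_cons hadj q₁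
    omega
  obtain ⟨x₁, hadj₁, q₂, rfl⟩ :=
    (Walk.not_nil_iff (p := q₁)).mp ((Walk.not_nil_iff_lt_length (p := q₁)).mpr (by omega))
  have hx₁mem : x₁ ∈ (Walk.cons hadj₁ q₂).support := by simp
  have hsx₁ : s ≠ x₁ := fun h => hsnq (h ▸ hx₁mem)
  have hsN : s ∈ G.neighborSet u := hadj.symm
  have hx₁N : x₁ ∈ G.neighborSet u := hadj₁
  -- third neighbor w
  obtain ⟨w, hwN, hws, hwx₁⟩ : ∃ w ∈ G.neighborSet u, w ≠ s ∧ w ≠ x₁ := by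
    by_contra h
    push_neg at h
    have hsub : G.neighborSet u ⊆ {s, x₁} := by
      intro z hz
      by_cases hzs : z = s
      · simp [hzs]
      · simp [h z hz hzs]
    have hle := Set.ncard_le_ncard hsub (Set.toFinite _)
    rw [Set.ncard_pair hsx₁] at hle
    have : PMT.deg G u = (G.neighborSet u).ncard := rfl
    omega
  have hadj_uw : G.Adj u w := hwN
  have hwu : w ≠ u := fun h => G.irrefl (h ▸ hadj_uw)
  have hwq₁ : w ∉ (Walk.cons hadj₁ q₂).support := by
    intro hmem
    rw [Walk.support_cons, List.mem_cons] at hmem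
    rcases hmem with h | h
    · exact hwu h
    · exact hwx₁ (PMT.adj_mem_eq_second hT hadj₁ q₂ hq₁ h hadj_uw)
  -- w is a leaf
  have hdw : PMT.deg G w = 1 := by
    by_contra hne
    have h1w : 1 ≤ PMT.deg G w := PMT.one_le_deg hadj_uw.symm
    obtain ⟨z, hzN, hzu⟩ : ∃ z ∈ G.neighborSet w, z ≠ u := by
      by_contra h
      push_neg at h
      have hsub : G.neighborSet w ⊆ {u} := by
        intro z hz; simp [h z hz]
      have hle := Set.ncard_le_ncard hsub (Set.toFinite _)
      rw [Set.ncard_singleton] at hle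
      have : PMT.deg G w = (G.neighborSet w).ncard := rfl
      omega
    have hadj_wz : G.Adj w z := hzN
    have hzw : z ≠ w := fun h => G.irrefl (h ▸ hadj_wz)
    have hzq₁ : z ∉ (Walk.cons hadj₁ q₂).support := by
      intro hmem
      have hpath1 : (Walk.cons hadj_uw (Walk.cons hadj_wz Walk.nil)).IsPath := by
        simp [Walk.isPath_def, hadj_uw.ne, hzu.symm, hadj_wz.ne]
      have hpath2 := hq₁.takeUntil hmem
      have heq := PMT.tree_path_unique hT _ _ hpath2 hpath1
      have hwin : w ∈ ((Walk.cons hadj₁ q₂).takeUntil z hmem).support := by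
        rw [heq]; simp
      exact hwq₁ ((Walk.cons hadj₁ q₂).support_takeUntil_subset hmem hwin)
    have hbig : (Walk.cons hadj_wz.symm (Walk.cons hadj_uw.symm (Walk.cons hadj₁ q₂))).IsPath := by
      rw [Walk.cons_isPath_iff, Walk.cons_isPath_iff]
      refine ⟨⟨hq₁, hwq₁⟩, ?_⟩
      rw [Walk.support_cons, List.mem_cons]
      rintro (h | h)
      · exact hzw h
      · exact hzq₁ h
    have hle := hmaxq _ hbig
    simp only [Walk.length_cons] at hle
    omega
  -- N(u) = {s, w, x₁}
  have hNu : G.neighborSet u = {s, w, x₁} := by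
    have hsub : ({s, w, x₁} : Set V) ⊆ G.neighborSet u := by
      intro z hz
      rcases hz with h | h | h
      · exact h ▸ hsN
      · exact h ▸ hwN
      · rw [Set.mem_singleton_iff] at h
        exact h ▸ hx₁N
    have hcard : ({s, w, x₁} : Set V).ncard = 3 := by
      rw [Set.ncard_insert_of_notMem (by
        simp only [Set.mem_insert_iff, Set.mem_singleton_iff]
        push_neg
        exact ⟨fun h => hws h.symm, hsx₁⟩) (Set.toFinite _), Set.ncard_pair hwx₁]
    refine (Set.eq_of_subset_of_ncard_le hsub ?_ (Set.toFinite _)).symm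
    rw [hcard]
    have : PMT.deg G u = (G.neighborSet u).ncard := rfl
    omega
  -- corridor from u along q₁
  obtain ⟨y, pstar, hppath, hplen, hdy2, hpint, hpsub⟩ :=
    PMT.exists_corridor_prefix (Walk.cons hadj₁ q₂) hq₁ (by omega) (by rw [hdt]; omega)
  have hcor : PMT.IsCorridor G pstar := ⟨hppath, hplen, by omega, hdy2, hpint⟩
  have hyu : y ≠ u := by
    intro h
    subst h
    have := PMT.path_loop_length_zero hppath
    omega
  have hy_in : y ∈ (Walk.cons hadj₁ q₂).support := hpsub pstar.end_mem_support
  have hys : y ≠ s := fun h => hsnq (h ▸ hy_in)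
  have hyw : y ≠ w := fun h => hwq₁ (h ▸ hy_in)
  -- second vertex of pstar is x₁
  have hx₁pstar : x₁ ∈ pstar.support ∧ (pstar.length = 1 → y = x₁) := by
    cases pstar with
    | nil => simp at hplen
    | @cons _ e _ hadjc p₂ =>
      have heN : e ∈ G.neighborSet u := hadjc
      have heq₁ : e ∈ (Walk.cons hadj₁ q₂).support := by
        apply hpsub
        simp
      have hex : e = x₁ := by
        rw [hNu] at heN
        rcases heN with h | h | h
        · exact absurd (h ▸ heq₁) hsnq
        · exact absurd (h ▸ heq₁) hwq₁
        · exact h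
      subst hex
      constructor
      · simp
      · intro hl
        rw [Walk.length_cons] at hl
        exact (Walk.eq_of_length_eq_zero (p := p₂) (by omega)).symm
  -- y is a junction
  have hjy : 2 < PMT.deg G y := by
    by_contra hny
    have h1y : 1 ≤ PMT.deg G y := (PMT.corridor_one_le_degs hcor).2
    have hy1 : PMT.deg G y = 1 := by omega
    have hl1 : pstar.length = 1 := claim1 u y _ hcor (Or.inr hy1)
    have hyx₁ : y = x₁ := hx₁pstar.2 hl1
    -- all neighbors of u are leaves
    have hdx₁ : PMT.deg G x₁ = 1 := hyx₁ ▸ hy1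
    -- get a junction different from u
    have hab₀ : a₀ ≠ b₀ := by
      intro h
      subst h
      have := PMT.path_loop_length_zero hc₀.1
      have := hc₀.2.1
      omega
    obtain ⟨j, hjdeg, hju⟩ : ∃ j : V, 2 < PMT.deg G j ∧ j ≠ u := by
      by_cases ha : a₀ = u
      · exact ⟨b₀, hjb₀, fun h => hab₀ (ha ▸ h ▸ rfl)⟩
      · exact ⟨a₀, hja₀, ha⟩
    obtain ⟨r₀⟩ := hT.isConnected.preconnected u j
    obtain ⟨rw₀, rwpath⟩ := r₀.toPath
    cases rw₀ with
    | nil => exact hju rfl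
    | @cons _ c _ h₁ r' =>
      have hcN : c ∈ G.neighborSet u := h₁
      have hdc : PMT.deg G c = 1 := by
        rw [hNu] at hcN
        rcases hcN with h | h | h
        · exact h ▸ hds
        · exact h ▸ hdw
        · rw [Set.mem_singleton_iff] at h
          exact h ▸ hdx₁
      cases r' with
      | nil => omega
      | @cons _ d _ h₂ r'' =>
        have hdN : d ∈ G.neighborSet c := h₂
        rw [PMT.leaf_neighborSet hdc h₁.symm] at hdN
        rw [Set.mem_singleton_iff] at hdN
        have hmem : u ∈ (Walk.cons h₂ r'').support := by
          rw [← hdN, Walk.support_cons]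
          exact List.mem_cons_of_mem _ r''.start_mem_support
        exact ((Walk.cons_isPath_iff _ _).mp rwpath).2 hmem
  -- x₁ is not a leaf
  have hx₁u : x₁ ≠ u := hadj₁.ne'
  have hdx₁ : PMT.deg G x₁ ≠ 1 := by
    by_cases h : x₁ = y
    · rw [h]; omega
    · have := hpint x₁ hx₁pstar.1 hx₁u h
      omega
  -- leaf characterization
  have hleaves : ∀ l : V, G.Adj u l → PMT.deg G l = 1 → l = s ∨ l = w := by
    intro l hal hdl
    have : l ∈ G.neighborSet u := hal
    rw [hNu] at this
    rcases this with h | h | h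
    · exact Or.inl h
    · exact Or.inr h
    · rw [Set.mem_singleton_iff] at h
      exact absurd (h ▸ hdl) hdx₁
  refine ⟨u, y, pstar, hcor, by omega, hjy, s, w, fun h => hws h.symm, hadj.symm, hadj_uw,
    hds, hdw, hleaves, ?_⟩
  intro v hv
  -- removal bounds
  have main : ∀ (v' : V), G.neighborSet u = {v, v', x₁} → v ≠ v' → v ≠ x₁ → v' ≠ x₁ →
      PMT.deg G v = 1 → PMT.deg G v' = 1 →
      PMT.c1 (G.induce {x : V | x ≠ v}) ≤ PMT.c2 G + 1 ∧
      PMT.c2 (G.induce {x : V | x ≠ v}) ≤ PMT.c2 G ∧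
      PMT.cT (G.induce {x : V | x ≠ v}) ≤ PMT.cT G := by
    intro v' hNu' hvv' hvx hv'x hdv hdv'
    have hb := fun {a' b'} (p' : (G.induce {x : V | x ≠ v}).Walk a' b')
        (hcp : PMT.IsCorridor (G.induce {x : V | x ≠ v}) p') =>
      PMT.induced_corridor_bound hT hNu' hvv' hvx hv'x hdv hdv' hdu p' hcp
    have hA : PMT.c1 (G.induce {x : V | x ≠ v}) ≤ PMT.c2 G + 1 := by
      apply csSup_le'
      rintro n ⟨a', b', p', hcp, rfl⟩
      obtain ⟨a, b, P, hP, hor⟩ := (hb p' hcp).2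
      have h1 : P.length ≤ PMT.c1 G := le_csSup hbdd1 ⟨a, b, P, hP, rfl⟩
      rcases hor with h | h <;> omega
    have hB : PMT.c2 (G.induce {x : V | x ≠ v}) ≤ PMT.c2 G := by
      apply csSup_le'
      rintro n ⟨a', b', p', hcp, hjA, hjB, rfl⟩
      obtain ⟨a, b, P, hP, hja', hjb', hlen⟩ := (hb p' hcp).1 ⟨hjA, hjB⟩
      have hle2 : P.length ≤ PMT.c2 G := le_csSup hbdd2 ⟨a, b, P, hP, hja', hjb', rfl⟩
      omega
    refine ⟨hA, hB, ?_⟩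
    rw [hcT, PMT.cT]
    split_ifs with h
    · omega
    · exact max_le (by omega) (by omega)
  rcases hv with rfl | rfl
  · exact main w hNu (fun h => hws h.symm) hsx₁ hwx₁ hds hdw
  · refine main s ?_ hws hwx₁ hsx₁ hdw hds
    rw [hNu, Set.insert_comm]
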